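/- Let V be a finite-dimensional real inner product space, b ∈ V with ‖b‖ = 1, g ∈ ℝ with |g| < 2, h = √(1 − g²/4), and let q, v, A, B, t, λ be as in the Finsleroid setting; put β_y(w) = ⟨b,w⟩ + (g/2)⟨v(y),w⟩/q(y). Then for every y with q(y) > 0, the mixed second derivative of λ (first in the first argument, then in the second) evaluated at the diagonal point (y, y), applied to (w₁, w₂), equals [β_y(w₁)β_y(w₂) + h²(⟨w₁,w₂⟩ − ⟨b,w₁⟩⟨b,w₂⟩)]/B(y) − ⟨t(y),w₁⟩⟨t(y),w₂⟩/B(y)². -/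

import Mathlib

/-!
Lift `y` to `ℓ y = (A y, h • v y)` in the `L²` product `ℝ × V`. Then
`⟪ℓ y₁, ℓ y₂⟫ = A y₁ A y₂ + h² (⟪y₁, y₂⟫ - ⟪b, y₁⟫⟪b, y₂⟫)` and, because `h² = 1 - g²/4`,
`‖ℓ y‖² = A² + h² q² = B`; so `λ(y₁, y₂) = ⟪N y₁, N y₂⟫` with `N = ℓ / ‖ℓ‖`, i.e. `λ` is the cosine
of the Euclidean angle between the lifts. The mixed second derivative of `(y₁, y₂) ↦ ⟪N y₁, N y₂⟫`
on the diagonal is `⟪DN w₁, DN w₂⟫`, and differentiating a normalised map gives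
`⟪DN w₁, DN w₂⟫ = ⟪Dℓ w₁, Dℓ w₂⟫ / ‖ℓ‖² - ⟪ℓ, Dℓ w₁⟫⟪ℓ, Dℓ w₂⟫ / ‖ℓ‖⁴`.
Here `Dℓ w = (β_y w, h • v w)` and `⟪ℓ y, Dℓ w⟫ = ½ DB(y) w = ⟪t y, w⟫`.
-/

open scoped InnerProductSpace
open Filter Topology

section Bilinear

variable {𝕜 E F G H : Type*} [NontriviallyNormedField 𝕜]
  [NormedAddCommGroup E] [NormedSpace 𝕜 E] [NormedAddCommGroup F] [NormedSpace 𝕜 F]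
  [NormedAddCommGroup G] [NormedSpace 𝕜 G] [NormedAddCommGroup H] [NormedSpace 𝕜 H]

theorem fderiv_fderiv_apply_eq_of_eventuallyEq_bilinear (β : F →L[𝕜] G →L[𝕜] H)
    {f : E → F} {g : E → G} {f' : E →L[𝕜] F} {g' : E →L[𝕜] G} {y : E}
    (hf : HasFDerivAt f f' y) (hg : HasFDerivAt g g' y) {lam : E → E → H}
    (hlam : ∀ᶠ z in 𝓝 y, ∀ᶠ y' in 𝓝 y, lam y' z = β (f y') (g z)) (w₁ w₂ : E) :
    fderiv 𝕜 (fun z => fderiv 𝕜 (fun y' => lam y' z) y) y w₂ w₁ = β (f' w₁) (g' w₂) := by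
  have hpartial : (fun z => fderiv 𝕜 (fun y' => lam y' z) y)
      =ᶠ[𝓝 y] fun z => (β.flip (g z)).comp f' := by
    filter_upwards [hlam] with z hz
    exact ((β.flip (g z)).hasFDerivAt.comp y hf).congr_of_eventuallyEq hz |>.fderiv
  have hmixed : HasFDerivAt (fun z => (β.flip (g z)).comp f')
      (((ContinuousLinearMap.compL 𝕜 E F H).flip f').comp (β.flip.comp g')) y :=
    (((ContinuousLinearMap.compL 𝕜 E F H).flip f').comp β.flip).hasFDerivAt.comp y hg
  rw [hpartial.fderiv_eq, hmixed.fderiv]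
  rfl

end Bilinear

section Normalize

variable {E G : Type*} [NormedAddCommGroup E] [NormedSpace ℝ E]
  [NormedAddCommGroup G] [InnerProductSpace ℝ G] {F : E → G} {F' : E →L[ℝ] G} {y : E}

theorem HasFDerivAt.norm (hF : HasFDerivAt F F' y) (h0 : F y ≠ 0) :
    HasFDerivAt (fun z => ‖F z‖) (‖F y‖⁻¹ • (innerSL ℝ (F y)).comp F') y := by
  have hsqrt := hF.norm_sq.sqrt (by positivity)
  simp only [Real.sqrt_sq (norm_nonneg _)] at hsqrt
  refine hsqrt.congr_fderiv ?_
  ext w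
  simp only [smul_apply, ContinuousLinearMap.comp_apply, coe_innerSL_apply, smul_eq_mul,
    nsmul_eq_mul, Nat.cast_ofNat]
  field_simp

theorem HasFDerivAt.inv_norm_smul (hF : HasFDerivAt F F' y) (h0 : F y ≠ 0) :
    HasFDerivAt (fun z => ‖F z‖⁻¹ • F z)
      (‖F y‖⁻¹ • F' - ((‖F y‖ ^ 3)⁻¹ • (innerSL ℝ (F y)).comp F').smulRight (F y)) y := by
  have hinv := (hasDerivAt_inv (norm_ne_zero_iff.mpr h0)).comp_hasFDerivAt y (hF.norm h0)
  refine (hinv.smul hF).congr_fderiv ?_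
  ext w
  simp only [Function.comp_apply, add_apply, sub_apply, smul_apply,
    ContinuousLinearMap.smulRight_apply, ContinuousLinearMap.comp_apply, innerSL_apply_apply,
    smul_eq_mul]
  module

theorem inner_fderiv_inv_norm_smul (hF : HasFDerivAt F F' y) (h0 : F y ≠ 0) (w₁ w₂ : E) :
    ⟪fderiv ℝ (fun z => ‖F z‖⁻¹ • F z) y w₁, fderiv ℝ (fun z => ‖F z‖⁻¹ • F z) y w₂⟫_ℝ
      = ⟪F' w₁, F' w₂⟫_ℝ / ‖F y‖ ^ 2 - ⟪F y, F' w₁⟫_ℝ * ⟪F y, F' w₂⟫_ℝ / ‖F y‖ ^ 4 := by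
  rw [(hF.inv_norm_smul h0).fderiv]
  simp only [sub_apply, smul_apply, ContinuousLinearMap.smulRight_apply,
    ContinuousLinearMap.comp_apply, innerSL_apply_apply, inner_sub_left, inner_sub_right,
    real_inner_smul_left, real_inner_smul_right, real_inner_self_eq_norm_sq,
    real_inner_comm (F y), smul_eq_mul]
  have : ‖F y‖ ≠ 0 := norm_ne_zero_iff.mpr h0
  field_simp
  ring

end Normalize

noncomputable section

namespace Finsleroid

variable {V : Type*} [NormedAddCommGroup V] [InnerProductSpace ℝ V] (b : V) (g h : ℝ)

def q (y : V) : ℝ := Real.sqrt (‖y‖ ^ 2 - ⟪b, y⟫_ℝ ^ 2)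

def v (y : V) : V := y - ⟪b, y⟫_ℝ • b

def A (y : V) : ℝ := ⟪b, y⟫_ℝ + (g / 2) * q b y

def B (y : V) : ℝ := ⟪b, y⟫_ℝ ^ 2 + g * ⟪b, y⟫_ℝ * q b y + q b y ^ 2

def t (y : V) : V := y + (g / 2) • (q b y • b + (⟪b, y⟫_ℝ / q b y) • v b y)

def lam (y₁ y₂ : V) : ℝ :=
  (A b g y₁ * A b g y₂ + h ^ 2 * (⟪y₁, y₂⟫_ℝ - ⟪b, y₁⟫_ℝ * ⟪b, y₂⟫_ℝ))
    / Real.sqrt (B b g y₁ * B b g y₂)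

def lift (y : V) : WithLp 2 (ℝ × V) := WithLp.toLp 2 (A b g y, h • v b y)

variable {b g h}

theorem inner_b_v (hb : ‖b‖ = 1) (y : V) : ⟪b, v b y⟫_ℝ = 0 := by
  simp [v, inner_sub_right, real_inner_smul_right, hb]

theorem inner_v_v (hb : ‖b‖ = 1) (y₁ y₂ : V) :
    ⟪v b y₁, v b y₂⟫_ℝ = ⟪y₁, y₂⟫_ℝ - ⟪b, y₁⟫_ℝ * ⟪b, y₂⟫_ℝ := by
  conv_lhs => rw [v]
  rw [inner_sub_left, real_inner_smul_left, inner_b_v hb, mul_zero, sub_zero, v,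
    inner_sub_right, real_inner_smul_right, real_inner_comm b y₁, mul_comm]

theorem q_eq_norm_v (hb : ‖b‖ = 1) (y : V) : q b y = ‖v b y‖ := by
  rw [q, ← Real.sqrt_sq (norm_nonneg (v b y)), ← real_inner_self_eq_norm_sq (v b y),
    inner_v_v hb, real_inner_self_eq_norm_sq]
  ring_nf

theorem hasFDerivAt_v (y : V) :
    HasFDerivAt (v b) (ContinuousLinearMap.id ℝ V - (innerSL ℝ b).smulRight b) y :=
  (ContinuousLinearMap.id ℝ V - (innerSL ℝ b).smulRight b).hasFDerivAt

theorem hasFDerivAt_q (hb : ‖b‖ = 1) {y : V} (hy : 0 < q b y) :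
    HasFDerivAt (q b) ((q b y)⁻¹ • innerSL ℝ (v b y)) y := by
  have hv : v b y ≠ 0 := by rw [← norm_pos_iff, ← q_eq_norm_v hb]; exact hy
  rw [q_eq_norm_v hb y, show q b = fun z => ‖v b z‖ from funext (q_eq_norm_v hb)]
  refine ((hasFDerivAt_v y).norm hv).congr_fderiv ?_
  ext w
  simp [real_inner_comm b, inner_b_v hb]

theorem hasFDerivAt_A (hb : ‖b‖ = 1) {y : V} (hy : 0 < q b y) :
    HasFDerivAt (A b g) (innerSL ℝ b + (g / 2) • (q b y)⁻¹ • innerSL ℝ (v b y)) y :=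
  (innerSL ℝ b).hasFDerivAt.add ((hasFDerivAt_q hb hy).const_mul (g / 2))

theorem hasFDerivAt_lift (hb : ‖b‖ = 1) {y : V} (hy : 0 < q b y) :
    HasFDerivAt (lift b g h)
      ((WithLp.prodContinuousLinearEquiv 2 ℝ ℝ V).symm.toContinuousLinearMap.comp
        ((innerSL ℝ b + (g / 2) • (q b y)⁻¹ • innerSL ℝ (v b y)).prod
          (h • (ContinuousLinearMap.id ℝ V - (innerSL ℝ b).smulRight b)))) y :=
  (WithLp.prodContinuousLinearEquiv 2 ℝ ℝ V).symm.hasFDerivAt.comp y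
    ((hasFDerivAt_A hb hy).prodMk ((hasFDerivAt_v y).const_smul h))

theorem fderiv_lift_apply (hb : ‖b‖ = 1) {y : V} (hy : 0 < q b y) (w : V) :
    fderiv ℝ (lift b g h) y w
      = WithLp.toLp 2 (⟪b, w⟫_ℝ + (g / 2) * ⟪v b y, w⟫_ℝ / q b y, h • v b w) := by
  rw [(hasFDerivAt_lift hb hy).fderiv]
  simp only [v, map_sub, map_smul, ContinuousLinearMap.comp_apply,
    ContinuousLinearMap.prod_apply, add_apply, coe_innerSL_apply, smul_apply, sub_apply,
    smul_eq_mul, ContinuousLinearMap.id_apply, ContinuousLinearMap.smulRight_apply,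
    ContinuousLinearEquiv.coe_coe, WithLp.prodContinuousLinearEquiv_symm_apply,
    inner_sub_left, real_inner_smul_left, WithLp.toLp.injEq, Prod.mk.injEq, add_right_inj,
    and_true]
  ring

theorem inner_lift (y₁ y₂ : V) :
    ⟪lift b g h y₁, lift b g h y₂⟫_ℝ = A b g y₁ * A b g y₂ + h ^ 2 * ⟪v b y₁, v b y₂⟫_ℝ := by
  simp only [lift, WithLp.prod_inner_apply, RCLike.inner_apply, Real.ringHom_apply,
    real_inner_smul_right, real_inner_smul_left]
  ring

theorem norm_lift_sq (hb : ‖b‖ = 1) (hh : h ^ 2 = 1 - g ^ 2 / 4) (y : V) :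
    ‖lift b g h y‖ ^ 2 = B b g y := by
  rw [← real_inner_self_eq_norm_sq, inner_lift, real_inner_self_eq_norm_sq, ← q_eq_norm_v hb,
    hh, A, B]
  ring

theorem lift_ne_zero (hb : ‖b‖ = 1) (hh : h ≠ 0) {y : V} (hy : 0 < q b y) :
    lift b g h y ≠ 0 := by
  have hv : v b y ≠ 0 := by rw [← norm_pos_iff, ← q_eq_norm_v hb]; exact hy
  intro h0
  exact smul_ne_zero hh hv (congrArg (fun x => (WithLp.ofLp x).2) h0)

theorem lam_eq_inner (hb : ‖b‖ = 1) (hh : h ^ 2 = 1 - g ^ 2 / 4) (y₁ y₂ : V) :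
    lam b g h y₁ y₂
      = ⟪‖lift b g h y₁‖⁻¹ • lift b g h y₁, ‖lift b g h y₂‖⁻¹ • lift b g h y₂⟫_ℝ := by
  rw [lam, ← norm_lift_sq hb hh, ← norm_lift_sq hb hh, ← mul_pow,
    Real.sqrt_sq (by positivity), ← inner_v_v hb, ← inner_lift, real_inner_smul_left,
    real_inner_smul_right, div_eq_mul_inv, mul_inv]
  ring

theorem inner_fderiv_lift (hb : ‖b‖ = 1) {y : V} (hy : 0 < q b y) (w₁ w₂ : V) :
    ⟪fderiv ℝ (lift b g h) y w₁, fderiv ℝ (lift b g h) y w₂⟫_ℝ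
      = (⟪b, w₁⟫_ℝ + (g / 2) * ⟪v b y, w₁⟫_ℝ / q b y)
          * (⟪b, w₂⟫_ℝ + (g / 2) * ⟪v b y, w₂⟫_ℝ / q b y)
        + h ^ 2 * (⟪w₁, w₂⟫_ℝ - ⟪b, w₁⟫_ℝ * ⟪b, w₂⟫_ℝ) := by
  simp only [fderiv_lift_apply hb hy, WithLp.prod_inner_apply, RCLike.inner_apply,
    Real.ringHom_apply, real_inner_smul_right, real_inner_smul_left, inner_v_v hb]
  ring

theorem inner_lift_fderiv_lift (hb : ‖b‖ = 1) (hh : h ^ 2 = 1 - g ^ 2 / 4) {y : V}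
    (hy : 0 < q b y) (w : V) :
    ⟪lift b g h y, fderiv ℝ (lift b g h) y w⟫_ℝ = ⟪t b g y, w⟫_ℝ := by
  have hyw : ⟪y, w⟫_ℝ = ⟪v b y, w⟫_ℝ + ⟪b, y⟫_ℝ * ⟪b, w⟫_ℝ := by
    rw [v, inner_sub_left, real_inner_smul_left]; ring
  have hvw : ⟪v b y, v b w⟫_ℝ = ⟪v b y, w⟫_ℝ := by
    show ⟪v b y, w - ⟪b, w⟫_ℝ • b⟫_ℝ = _
    rw [inner_sub_right, real_inner_smul_right, real_inner_comm b, inner_b_v hb, mul_zero,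
      sub_zero]
  have hq : q b y ≠ 0 := hy.ne'
  rw [fderiv_lift_apply hb hy]
  simp only [lift, A, t, WithLp.prod_inner_apply, RCLike.inner_apply, Real.ringHom_apply,
    real_inner_smul_right, real_inner_smul_left, smul_add, inner_add_left, hvw, hyw]
  field_simp
  rw [hh]
  ring

end Finsleroid

end

theorem finsleroid_lambda_mixed_second_derivative_diagonal_general
    {V : Type*} [NormedAddCommGroup V] [InnerProductSpace ℝ V]
    (b : V) (hb : ‖b‖ = 1) (g h : ℝ) (hg : |g| < 2)
    (hh : h = Real.sqrt (1 - g ^ 2 / 4))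
    (q A B : V → ℝ) (v t : V → V) (lam : V → V → ℝ)
    (hq : ∀ y : V, q y = Real.sqrt (‖y‖ ^ 2 - ⟪b, y⟫_ℝ ^ 2))
    (hv : ∀ y : V, v y = y - ⟪b, y⟫_ℝ • b)
    (hA : ∀ y : V, A y = ⟪b, y⟫_ℝ + (g / 2) * q y)
    (hB : ∀ y : V, B y = ⟪b, y⟫_ℝ ^ 2 + g * ⟪b, y⟫_ℝ * q y + q y ^ 2)
    (ht : ∀ y : V, t y = y + (g / 2) • (q y • b + (⟪b, y⟫_ℝ / q y) • v y))
    (hlam : ∀ y₁ y₂ : V, y₁ ≠ 0 → y₂ ≠ 0 →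
      lam y₁ y₂ = (A y₁ * A y₂ + h ^ 2 * (⟪y₁, y₂⟫_ℝ - ⟪b, y₁⟫_ℝ * ⟪b, y₂⟫_ℝ))
        / Real.sqrt (B y₁ * B y₂)) :
    ∀ y : V, 0 < q y → ∀ w₁ w₂ : V,
      (fderiv ℝ (fun z => fderiv ℝ (fun y' => lam y' z) y) y w₂) w₁
        = ((⟪b, w₁⟫_ℝ + (g / 2) * ⟪v y, w₁⟫_ℝ / q y)
              * (⟪b, w₂⟫_ℝ + (g / 2) * ⟪v y, w₂⟫_ℝ / q y)
            + h ^ 2 * (⟪w₁, w₂⟫_ℝ - ⟪b, w₁⟫_ℝ * ⟪b, w₂⟫_ℝ)) / B y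
          - ⟪t y, w₁⟫_ℝ * ⟪t y, w₂⟫_ℝ / B y ^ 2 := by
  intro y hy w₁ w₂
  obtain rfl : q = Finsleroid.q b := funext hq
  obtain rfl : v = Finsleroid.v b := funext hv
  obtain rfl : A = Finsleroid.A b g := funext hA
  obtain rfl : B = Finsleroid.B b g := funext hB
  obtain rfl : t = Finsleroid.t b g := funext ht
  have hg2 : g ^ 2 < 4 := by nlinarith [abs_lt.mp hg]
  have hh2 : h ^ 2 = 1 - g ^ 2 / 4 := by rw [hh, Real.sq_sqrt (by linarith)]
  have hh0 : h ≠ 0 := by rintro rfl; linarith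
  have hy0 : y ≠ 0 := by rintro rfl; simp [Finsleroid.q] at hy
  set F := Finsleroid.lift b g h
  have hF : HasFDerivAt F (fderiv ℝ F y) y :=
    (Finsleroid.hasFDerivAt_lift hb hy).differentiableAt.hasFDerivAt
  have hF0 : F y ≠ 0 := Finsleroid.lift_ne_zero hb hh0 hy
  have hN := (hF.inv_norm_smul hF0).differentiableAt.hasFDerivAt
  have hlamN : ∀ᶠ z in 𝓝 y, ∀ᶠ y' in 𝓝 y,
      lam y' z = innerSL ℝ (‖F y'‖⁻¹ • F y') (‖F z‖⁻¹ • F z) := by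
    filter_upwards [eventually_ne_nhds hy0] with z hz
    filter_upwards [eventually_ne_nhds hy0] with y' hy'
    exact (hlam y' z hy' hz).trans (Finsleroid.lam_eq_inner hb hh2 y' z)
  rw [fderiv_fderiv_apply_eq_of_eventuallyEq_bilinear (innerSL ℝ) hN hN hlamN,
    innerSL_apply_apply, inner_fderiv_inv_norm_smul hF hF0, Finsleroid.inner_fderiv_lift hb hy,
    Finsleroid.inner_lift_fderiv_lift hb hh2 hy, Finsleroid.inner_lift_fderiv_lift hb hh2 hy,
    show ‖F y‖ ^ 4 = (‖F y‖ ^ 2) ^ 2 by ring, Finsleroid.norm_lift_sq hb hh2]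

/-- In the Finsleroid setting, the mixed second derivative of `λ` (first
in the first argument, then in the second) at a diagonal point `(y, y)` with
`q(y) > 0`, applied to `(w₁, w₂)`, equals
`[β_y(w₁)β_y(w₂) + h²(⟨w₁,w₂⟩ − ⟨b,w₁⟩⟨b,w₂⟩)]/B(y) − ⟨t(y),w₁⟩⟨t(y),w₂⟩/B(y)²`,
where `β_y(w) = ⟨b,w⟩ + (g/2)⟨v(y),w⟩/q(y)`. -/
theorem finsleroid_lambda_mixed_second_derivative_diagonal
    {V : Type*} [NormedAddCommGroup V] [InnerProductSpace ℝ V] [FiniteDimensional ℝ V]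
    (b : V) (hb : ‖b‖ = 1) (g h : ℝ) (hg : |g| < 2)
    (hh : h = Real.sqrt (1 - g ^ 2 / 4))
    (q A B : V → ℝ) (v t : V → V) (lam : V → V → ℝ)
    (hq : ∀ y : V, q y = Real.sqrt (‖y‖ ^ 2 - ⟪b, y⟫_ℝ ^ 2))
    (hv : ∀ y : V, v y = y - ⟪b, y⟫_ℝ • b)
    (hA : ∀ y : V, A y = ⟪b, y⟫_ℝ + (g / 2) * q y)
    (hB : ∀ y : V, B y = ⟪b, y⟫_ℝ ^ 2 + g * ⟪b, y⟫_ℝ * q y + q y ^ 2)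
    (ht : ∀ y : V, t y = y + (g / 2) • (q y • b + (⟪b, y⟫_ℝ / q y) • v y))
    (hlam : ∀ y₁ y₂ : V, y₁ ≠ 0 → y₂ ≠ 0 →
      lam y₁ y₂ = (A y₁ * A y₂ + h ^ 2 * (⟪y₁, y₂⟫_ℝ - ⟪b, y₁⟫_ℝ * ⟪b, y₂⟫_ℝ))
        / Real.sqrt (B y₁ * B y₂)) :
    ∀ y : V, 0 < q y → ∀ w₁ w₂ : V,
      (fderiv ℝ (fun z => fderiv ℝ (fun y' => lam y' z) y) y w₂) w₁
        = ((⟪b, w₁⟫_ℝ + (g / 2) * ⟪v y, w₁⟫_ℝ / q y)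
              * (⟪b, w₂⟫_ℝ + (g / 2) * ⟪v y, w₂⟫_ℝ / q y)
            + h ^ 2 * (⟪w₁, w₂⟫_ℝ - ⟪b, w₁⟫_ℝ * ⟪b, w₂⟫_ℝ)) / B y
          - ⟪t y, w₁⟫_ℝ * ⟪t y, w₂⟫_ℝ / B y ^ 2 :=
  finsleroid_lambda_mixed_second_derivative_diagonal_general b hb g h hg hh q A B v t lam hq hv hA
    hB ht hlam
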